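/- arXiv:1102.0627 — 11 statements merged into one kernel-verified Lean document; each statement's English description precedes it below -/
import Mathlib

section
/- (Lemma 1, forward direction.) Let N ≥ 1, α ∈ ℝ and θ_1,…,θ_N ∈ ℝ. Suppose that for every i = 2,…,N one has ∑_{j=1}^N sin(θ_1 − θ_j − α) = ∑_{j=1}^N sin(θ_i − θ_j − α), i.e. g_1(θ,α) = g_i(θ,α) for all i. Then at least one of the following holds: (a) ∑_{j=1}^N cos θ_j = 0 and ∑_{j=1}^N sin θ_j = 0; (b) there exist a, b ∈ ℝ such that every θ_i is congruent modulo 2π either to a or to b (i.e. the phases take at most two distinct values modulo 2π). -/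
/-!
Write `z = ∑ⱼ exp(i θⱼ)` in polar form `z = R e^{iφ}`. Then
`∑ⱼ sin(θᵢ - θⱼ - α) = R sin(θᵢ - α - φ)`, so if the order parameter `z` does not vanish the
hypothesis says that `sin(θᵢ - α - φ)` is the same for all `i`. Equal sines put `θᵢ - α - φ`
in one of two classes modulo `2π`, which gives the two clusters `θ₁` and `π + 2(α + φ) - θ₁`.
-/

open Real Finset

section OrderParameter

variable {ι : Type*} (s : Finset ι) (θ : ι → ℝ)

lemma re_sum_exp_mul_I : (∑ j ∈ s, Complex.exp (θ j * Complex.I)).re = ∑ j ∈ s, cos (θ j) := by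
  simp [Complex.re_sum]

lemma im_sum_exp_mul_I : (∑ j ∈ s, Complex.exp (θ j * Complex.I)).im = ∑ j ∈ s, sin (θ j) := by
  simp [Complex.im_sum]

lemma sum_sin_sub_eq_norm_mul_sin (x : ℝ) :
    ∑ j ∈ s, sin (x - θ j) =
      ‖∑ j ∈ s, Complex.exp (θ j * Complex.I)‖ *
        sin (x - Complex.arg (∑ j ∈ s, Complex.exp (θ j * Complex.I))) := by
  set z := ∑ j ∈ s, Complex.exp (θ j * Complex.I)
  have hre : ‖z‖ * cos (Complex.arg z) = ∑ j ∈ s, cos (θ j) :=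
    (Complex.norm_mul_cos_arg z).trans (re_sum_exp_mul_I s θ)
  have him : ‖z‖ * sin (Complex.arg z) = ∑ j ∈ s, sin (θ j) :=
    (Complex.norm_mul_sin_arg z).trans (im_sum_exp_mul_I s θ)
  simp only [sin_sub, Finset.sum_sub_distrib, ← Finset.mul_sum, ← hre, ← him]
  ring

end OrderParameter

lemma two_clusters_of_sin_sub_eq {x y c : ℝ} (h : sin (x - c) = sin (y - c)) :
    (∃ k : ℤ, x - y = 2 * π * k) ∨ (∃ k : ℤ, x - (π + 2 * c - y) = 2 * π * k) := by
  obtain ⟨k, hk | hk⟩ := Real.sin_eq_sin_iff.mp h.symm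
  · exact Or.inl ⟨k, by linarith⟩
  · exact Or.inr ⟨k, by linarith⟩

/-- Lemma 1 (forward direction) for the Kuramoto–Sakaguchi model: if all the
coupling terms `g_i(θ,α) = -∑_j sin(θ_i - θ_j - α)` coincide, then either the
order parameter vanishes, or the phases take at most two distinct values
modulo `2π` (a one- or two-cluster state). -/
theorem stmt_1 (N : ℕ) (hN : 1 ≤ N) (α : ℝ) (θ : Fin N → ℝ)
    (heq : ∀ i : Fin N, ∑ j, Real.sin (θ ⟨0, hN⟩ - θ j - α)
                      = ∑ j, Real.sin (θ i - θ j - α)) :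
    ((∑ j, Real.cos (θ j)) = 0 ∧ (∑ j, Real.sin (θ j)) = 0) ∨
    (∃ a b : ℝ, ∀ i : Fin N,
       (∃ k : ℤ, θ i - a = 2 * π * k) ∨ (∃ k : ℤ, θ i - b = 2 * π * k)) := by
  set z := ∑ j, Complex.exp (θ j * Complex.I)
  by_cases hz : z = 0
  · left
    rw [← re_sum_exp_mul_I, ← im_sum_exp_mul_I]
    exact ⟨congrArg Complex.re hz, congrArg Complex.im hz⟩
  right
  have hsum : ∀ i, ∑ j, sin (θ i - θ j - α) = ‖z‖ * sin (θ i - α - Complex.arg z) := fun i => by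
    simp only [sub_right_comm (θ i) _ α]
    exact sum_sin_sub_eq_norm_mul_sin _ θ _
  have hsin : ∀ i, sin (θ i - (α + Complex.arg z)) = sin (θ ⟨0, hN⟩ - (α + Complex.arg z)) :=
    fun i => by
      have := heq i
      rw [hsum, hsum, mul_right_inj' (norm_ne_zero_iff.mpr hz)] at this
      simpa only [sub_add_eq_sub_sub] using this.symm
  exact ⟨θ ⟨0, hN⟩, π + 2 * (α + Complex.arg z) - θ ⟨0, hN⟩,
    fun i => two_clusters_of_sin_sub_eq (hsin i)⟩
end

section
/- (Lemma 2, forward direction.) Let N ≥ 1, θ_1,…,θ_N ∈ ℝ, and let α̃ : ℝ^N → ℝ be an arbitrary function of the phases. Suppose that with A = α̃(θ_1,…,θ_N) one has ∑_{j=1}^N sin(θ_1 − θ_j − A) = ∑_{j=1}^N sin(θ_i − θ_j − A) for every i = 2,…,N. Then at least one of the following holds: (a) ∑_{j=1}^N cos θ_j = 0 and ∑_{j=1}^N sin θ_j = 0; (b) there exist a, b ∈ ℝ such that every θ_i is congruent modulo 2π either to a or to b. -/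
open Real Finset

/-
With `z = ∑ⱼ exp(i θⱼ)` (N times the order parameter), every coupling term is a single sinusoid:
`∑ⱼ sin(x - θⱼ) = ‖z‖ sin(x - arg z)`. If `z = 0` we are in case (a). Otherwise the equilibrium
condition reads `sin(θᵢ - α̃ - arg z) = sin(θ₁ - α̃ - arg z)`, and the two solution branches of
`sin u = sin v` put each `θᵢ` at `θ₁` or at `π - θ₁ + 2(α̃ + arg z)` modulo `2π`.
-/

namespace Complex

theorem re_sum_exp_ofReal_mul_I {ι : Type*} [Fintype ι] (θ : ι → ℝ) :
    (∑ j, cexp (θ j * I)).re = ∑ j, Real.cos (θ j) := by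
  simp only [re_sum, exp_ofReal_mul_I_re]

theorem im_sum_exp_ofReal_mul_I {ι : Type*} [Fintype ι] (θ : ι → ℝ) :
    (∑ j, cexp (θ j * I)).im = ∑ j, Real.sin (θ j) := by
  simp only [im_sum, exp_ofReal_mul_I_im]

theorem sum_sin_sub_eq_norm_mul_sin {ι : Type*} [Fintype ι] (θ : ι → ℝ) (x : ℝ) :
    ∑ j, Real.sin (x - θ j) =
      ‖∑ j, cexp (θ j * I)‖ * Real.sin (x - arg (∑ j, cexp (θ j * I))) := by
  set z := ∑ j, cexp (θ j * I)
  calc ∑ j, Real.sin (x - θ j)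
      = Real.sin x * z.re - Real.cos x * z.im := by
        simp only [z, re_sum_exp_ofReal_mul_I, im_sum_exp_ofReal_mul_I, Real.sin_sub, mul_sum,
          sum_sub_distrib]
    _ = Real.sin x * (‖z‖ * Real.cos (arg z)) - Real.cos x * (‖z‖ * Real.sin (arg z)) := by
        rw [norm_mul_cos_arg, norm_mul_sin_arg]
    _ = ‖z‖ * Real.sin (x - arg z) := by rw [Real.sin_sub]; ring

end Complex

theorem exists_int_of_sin_sub_eq_sin_sub (c x y : ℝ) (h : Real.sin (x - c) = Real.sin (y - c)) :
    (∃ k : ℤ, x - y = 2 * π * k) ∨ (∃ k : ℤ, x - (π - y + 2 * c) = 2 * π * k) := by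
  obtain ⟨k, hk | hk⟩ := Real.sin_eq_sin_iff.mp h
  · exact Or.inl ⟨-k, by push_cast; linarith⟩
  · exact Or.inr ⟨k, by linarith⟩

/-- Lemma 2 (forward direction): the same dichotomy as Lemma 1 holds when the
phase shift is an arbitrary scalar function `α̃` of the full phase
configuration (e.g. a function of the order parameter): if all the coupling
terms `g_i(θ, α̃(θ))` coincide, then either the order parameter vanishes, or
the phases take at most two distinct values modulo `2π`. -/
theorem stmt_2 (N : ℕ) (hN : 1 ≤ N) (αf : (Fin N → ℝ) → ℝ) (θ : Fin N → ℝ)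
    (heq : ∀ i : Fin N, ∑ j, Real.sin (θ ⟨0, hN⟩ - θ j - αf θ)
                      = ∑ j, Real.sin (θ i - θ j - αf θ)) :
    ((∑ j, Real.cos (θ j)) = 0 ∧ (∑ j, Real.sin (θ j)) = 0) ∨
    (∃ a b : ℝ, ∀ i : Fin N,
       (∃ k : ℤ, θ i - a = 2 * π * k) ∨ (∃ k : ℤ, θ i - b = 2 * π * k)) := by
  set z := ∑ j, Complex.exp (θ j * Complex.I)
  have hsinusoid : ∀ i, ‖z‖ * Real.sin (θ i - (αf θ + z.arg)) =
      ‖z‖ * Real.sin (θ ⟨0, hN⟩ - (αf θ + z.arg)) := by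
    intro i
    have h := heq i
    simp only [sub_right_comm _ (θ _) (αf θ)] at h
    rw [Complex.sum_sin_sub_eq_norm_mul_sin, Complex.sum_sin_sub_eq_norm_mul_sin, sub_sub,
      sub_sub] at h
    exact h.symm
  rcases eq_or_ne z 0 with hz | hz
  · left
    rw [← Complex.re_sum_exp_ofReal_mul_I, ← Complex.im_sum_exp_ofReal_mul_I]
    exact ⟨congrArg Complex.re hz, congrArg Complex.im hz⟩
  · right
    refine ⟨θ ⟨0, hN⟩, π - θ ⟨0, hN⟩ + 2 * (αf θ + z.arg), fun i => ?_⟩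
    exact exists_int_of_sin_sub_eq_sin_sub _ _ _
      (mul_left_cancel₀ (norm_ne_zero_iff.mpr hz) (hsinusoid i))
end

section
/- (Two-cluster equilibrium criterion.) Let N ≥ 2, 1 ≤ p ≤ N−1, and a, b, α ∈ ℝ. Define θ_i = a for 1 ≤ i ≤ p and θ_i = b for p+1 ≤ i ≤ N. Then the quantities g_i(θ,α) = −∑_{j=1}^N sin(θ_i − θ_j − α) take the same value for all i = 1,…,N if and only if N cos α · sin(a−b) = (N − 2p) sin α · (cos(a−b) − 1). In particular, every two-cluster configuration with a given cluster partition (p : N−p) is an equilibrium of the phase-difference system exactly for the phase separations δ = a−b solving this scalar trigonometric equation. -/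
/-!
Oscillator `i` feels `g_i = F(θ_i)` with `F(c) = -(p sin(c - a - α) + (N - p) sin(c - b - α))`,
so once both clusters are nonempty all `g_i` agree iff `F(a) = F(b)`. Expanding the sines with
`δ = a - b`, `F(a) - F(b)` is `-(N cos α sin δ + (N - 2p) sin α (1 - cos δ))`.
-/

open Real Finset

theorem Fin.sum_ite_val_lt {M : Type*} [AddCommMonoid M] {N p : ℕ} (hp : p ≤ N) (x y : M) :
    ∑ j : Fin N, (if (j : ℕ) < p then x else y) = p • x + (N - p) • y := by
  have hcard : #{j : Fin N | (j : ℕ) < p} = p := by rw [Fin.card_filter_val_lt, min_eq_right hp]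
  rw [sum_ite, Finset.sum_const, Finset.sum_const, hcard, filter_not,
    card_sdiff_of_subset (filter_subset _ _), hcard, card_univ, Fintype.card_fin]

theorem sin_two_cluster_sum_eq_iff (P N α δ : ℝ) :
    P * sin (-α) + (N - P) * sin (δ - α) = P * sin (-δ - α) + (N - P) * sin (-α) ↔
      N * cos α * sin δ = (N - 2 * P) * sin α * (cos δ - 1) := by
  simp only [sin_neg, sin_sub, neg_sub_left, sin_add]
  constructor <;> intro h <;> linear_combination h

section TwoCluster

variable {X M : Type*} {N p : ℕ} {a b : X} {θ : Fin N → X}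

theorem sum_comp_two_cluster [AddCommMonoid M] (hp : p ≤ N)
    (hθ : ∀ i : Fin N, θ i = if (i : ℕ) < p then a else b) (h : X → M) :
    ∑ j, h (θ j) = p • h a + (N - p) • h b := by
  simp_rw [hθ, apply_ite h]
  exact Fin.sum_ite_val_lt hp _ _

theorem forall_comp_eq_iff_of_two_cluster (hp1 : 1 ≤ p) (hpN : p < N)
    (hθ : ∀ i : Fin N, θ i = if (i : ℕ) < p then a else b) (f : X → M) :
    (∀ i i', f (θ i) = f (θ i')) ↔ f a = f b := by
  constructor
  · intro h
    simpa [hθ, show 0 < p by omega] using h ⟨0, by omega⟩ ⟨p, hpN⟩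
  · intro h
    have hfa (i : Fin N) : f (θ i) = f a := by
      rw [hθ i]
      split_ifs
      exacts [rfl, h.symm]
    intro i i'
    rw [hfa i, hfa i']

end TwoCluster

theorem stmt_3_general (N p : ℕ) (hp1 : 1 ≤ p) (hp2 : p ≤ N - 1)
    (a b α : ℝ) (θ : Fin N → ℝ)
    (hθ : ∀ i : Fin N, θ i = if (i : ℕ) < p then a else b) :
    (∀ i i' : Fin N,
        -(∑ j, Real.sin (θ i - θ j - α)) = -(∑ j, Real.sin (θ i' - θ j - α)))
    ↔ (N : ℝ) * Real.cos α * Real.sin (a - b)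
        = ((N : ℝ) - 2 * p) * Real.sin α * (Real.cos (a - b) - 1) := by
  have hpN : p < N := by omega
  have hsum (c : ℝ) :
      ∑ j, sin (c - θ j - α) = p * sin (c - a - α) + (N - p) * sin (c - b - α) := by
    rw [sum_comp_two_cluster hpN.le hθ (fun t => sin (c - t - α)), nsmul_eq_mul, nsmul_eq_mul,
      Nat.cast_sub hpN.le]
  refine (forall_comp_eq_iff_of_two_cluster hp1 hpN hθ
    fun c => -∑ j, sin (c - θ j - α)).trans ?_
  rw [neg_inj, hsum, hsum, sub_self, sub_self, zero_sub, ← neg_sub a b]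
  exact sin_two_cluster_sum_eq_iff _ _ _ _

/-- Two-cluster equilibrium criterion: for the two-cluster configuration with
`p` phases equal to `a` and `N - p` phases equal to `b`, the quantities
`g_i(θ,α) = -∑_j sin(θ_i - θ_j - α)` all coincide if and only if
`N cos α · sin(a-b) = (N - 2p) sin α · (cos(a-b) - 1)`. -/
theorem stmt_3 (N p : ℕ) (hN : 2 ≤ N) (hp1 : 1 ≤ p) (hp2 : p ≤ N - 1)
    (a b α : ℝ) (θ : Fin N → ℝ)
    (hθ : ∀ i : Fin N, θ i = if (i : ℕ) < p then a else b) :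
    (∀ i i' : Fin N,
        -(∑ j, Real.sin (θ i - θ j - α)) = -(∑ j, Real.sin (θ i' - θ j - α)))
    ↔ (N : ℝ) * Real.cos α * Real.sin (a - b)
        = ((N : ℝ) - 2 * p) * Real.sin α * (Real.cos (a - b) - 1) :=
  stmt_3_general N p hp1 hp2 a b α θ hθ
end

section
/- Let N ≥ 2, let p be an integer with 1 ≤ p ≤ N−1, and let α ∈ ℝ with cos α ≠ 0. Then the set {φ ∈ [0, 2π) : p sin(φ − α) + (N − p) sin(φ + α) − (N − 2p) sin α = 0} has exactly two elements, one of which is φ = 0. -/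
open Real Set

/-- On the two-cluster invariant line with isotropy `S_p × S_{N-p}`, for
`cos α ≠ 0` the equilibrium equation
`p sin(φ-α) + (N-p) sin(φ+α) - (N-2p) sin α = 0` has exactly two solutions in
`[0, 2π)`, one of which is `φ = 0`. -/
theorem stmt_5 (N p : ℕ) (hN : 2 ≤ N) (hp1 : 1 ≤ p) (hp2 : p ≤ N - 1)
    (α : ℝ) (hα : Real.cos α ≠ 0) :
    (0 : ℝ) ∈ {φ : ℝ | φ ∈ Set.Ico (0 : ℝ) (2 * π) ∧
        (p : ℝ) * Real.sin (φ - α) + ((N : ℝ) - p) * Real.sin (φ + α)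
          - ((N : ℝ) - 2 * p) * Real.sin α = 0} ∧
    {φ : ℝ | φ ∈ Set.Ico (0 : ℝ) (2 * π) ∧
        (p : ℝ) * Real.sin (φ - α) + ((N : ℝ) - p) * Real.sin (φ + α)
          - ((N : ℝ) - 2 * p) * Real.sin α = 0}.ncard = 2 := by
  have hπ := Real.pi_pos
  obtain ⟨A, hAdef⟩ : ∃ A : ℝ, A = (N : ℝ) * Real.cos α := ⟨_, rfl⟩
  obtain ⟨B, hBdef⟩ : ∃ B : ℝ, B = ((N : ℝ) - 2 * p) * Real.sin α := ⟨_, rfl⟩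
  have hN0 : (N : ℝ) ≠ 0 := by
    have : (0 : ℝ) < N := by exact_mod_cast Nat.lt_of_lt_of_le (by norm_num) hN
    exact this.ne'
  have hA0 : A ≠ 0 := hAdef ▸ mul_ne_zero hN0 hα
  obtain ⟨t, htdef⟩ : ∃ t : ℝ, t = B / A := ⟨_, rfl⟩
  obtain ⟨ψ₀, hψdef⟩ : ∃ x : ℝ, x = π / 2 - Real.arctan t := ⟨_, rfl⟩
  have hψpos : 0 < ψ₀ := by
    have := Real.arctan_lt_pi_div_two t
    rw [hψdef]; linarith
  have hψlt : ψ₀ < π := by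
    have := Real.neg_pi_div_two_lt_arctan t
    rw [hψdef]; linarith
  have hcosψ : Real.cos ψ₀ = Real.sin (Real.arctan t) := by
    rw [hψdef]; exact Real.cos_pi_div_two_sub _
  have hsinψ : Real.sin ψ₀ = Real.cos (Real.arctan t) := by
    rw [hψdef]; exact Real.sin_pi_div_two_sub _
  have hcospos : 0 < Real.cos (Real.arctan t) := Real.cos_arctan_pos t
  have heq0 : A * Real.cos ψ₀ - B * Real.sin ψ₀ = 0 := by
    have htan := Real.tan_arctan t
    rw [Real.tan_eq_sin_div_cos] at htan
    have hsin : Real.sin (Real.arctan t) = t * Real.cos (Real.arctan t) := by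
      field_simp at htan; linarith [htan]
    have hAt : A * t = B := by
      rw [htdef]; field_simp
    rw [hcosψ, hsinψ, hsin]
    linear_combination Real.cos (Real.arctan t) * hAt
  -- key equivalence
  have hkey : ∀ φ : ℝ,
      ((p : ℝ) * Real.sin (φ - α) + ((N : ℝ) - p) * Real.sin (φ + α)
          - ((N : ℝ) - 2 * p) * Real.sin α = 0) ↔
      Real.sin (φ / 2) * (A * Real.cos (φ / 2) - B * Real.sin (φ / 2)) = 0 := by
    intro φ
    have h1 := Real.sin_two_mul (φ / 2)
    have h2 := Real.cos_two_mul (φ / 2)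
    rw [show 2 * (φ / 2) = φ by ring] at h1 h2
    have h3 := Real.sin_sq_add_cos_sq (φ / 2)
    have hmain : (p : ℝ) * Real.sin (φ - α) + ((N : ℝ) - p) * Real.sin (φ + α)
          - ((N : ℝ) - 2 * p) * Real.sin α
        = 2 * (Real.sin (φ / 2) * (A * Real.cos (φ / 2) - B * Real.sin (φ / 2))) := by
      rw [Real.sin_sub, Real.sin_add, h1, h2, hAdef, hBdef]
      linear_combination (2 * ((N : ℝ) - 2 * p) * Real.sin α) * h3
    rw [hmain]
    constructor
    · intro h; linarith
    · intro h; linarith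
  have hset : {φ : ℝ | φ ∈ Set.Ico (0 : ℝ) (2 * π) ∧
        (p : ℝ) * Real.sin (φ - α) + ((N : ℝ) - p) * Real.sin (φ + α)
          - ((N : ℝ) - 2 * p) * Real.sin α = 0} = {0, 2 * ψ₀} := by
    ext φ
    simp only [Set.mem_setOf_eq, Set.mem_insert_iff, Set.mem_singleton_iff,
      Set.mem_Ico]
    constructor
    · rintro ⟨⟨h0, h2π⟩, heq⟩
      rw [hkey φ, mul_eq_zero] at heq
      rcases heq with hs | hf
      · left
        by_contra hne
        have hpos : 0 < φ := lt_of_le_of_ne h0 (Ne.symm hne)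
        have : 0 < Real.sin (φ / 2) :=
          Real.sin_pos_of_pos_of_lt_pi (by linarith) (by linarith)
        linarith
      · right
        have hφpos : 0 < φ := by
          rcases lt_or_eq_of_le h0 with h | h
          · exact h
          · exfalso
            rw [← h] at hf
            simp at hf
            exact hA0 hf
        have hz : Real.sin (φ / 2 - ψ₀) = 0 := by
          have hAz : A * (Real.sin (φ / 2) * Real.cos ψ₀
              - Real.cos (φ / 2) * Real.sin ψ₀) = 0 := by
            linear_combination Real.sin (φ / 2) * heq0 - Real.sin ψ₀ * hf
          rw [Real.sin_sub]
          exact (mul_eq_zero.mp hAz).resolve_left hA0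
        have hb1 : -π < φ / 2 - ψ₀ := by linarith
        have hb2 : φ / 2 - ψ₀ < π := by linarith
        have := (Real.sin_eq_zero_iff_of_lt_of_lt hb1 hb2).mp hz
        linarith
    · rintro (rfl | rfl)
      · refine ⟨⟨le_refl _, by linarith⟩, ?_⟩
        rw [hkey]
        simp
      · refine ⟨⟨by linarith, by linarith⟩, ?_⟩
        rw [hkey, show 2 * ψ₀ / 2 = ψ₀ by ring]
        linear_combination Real.sin ψ₀ * heq0
  constructor
  · rw [hset]; left; rfl
  · rw [hset, Set.ncard_pair]
    intro h
    have : (0 : ℝ) < 2 * ψ₀ := by linarith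
    rw [← h] at this
    exact lt_irrefl _ this
end

section
/- Let N ≥ 2, let p be an integer with 1 ≤ p ≤ N−1, and let α ∈ ℝ with cos α ≠ 0. If φ ∈ (0, 2π) satisfies p sin(φ − α) + (N − p) sin(φ + α) − (N − 2p) sin α = 0, then cos φ = −(2p(N−p) + (N² − 2p(N−p)) cos 2α) / (N² + 2p(N−p)(cos 2α − 1)); equivalently, cos φ = ((N−2p)² sin²α − N² cos²α) / ((N−2p)² sin²α + N² cos²α). (The denominator N² + 2p(N−p)(cos 2α − 1) = N² cos²α + (N−2p)² sin²α is strictly positive when cos α ≠ 0.) -/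
open Real

/-- The nontrivial two-cluster equilibrium: if `φ ∈ (0, 2π)` solves
`p sin(φ-α) + (N-p) sin(φ+α) - (N-2p) sin α = 0` with `cos α ≠ 0`, then
`cos φ` is given by the explicit formula, in both of its equivalent forms. -/
theorem stmt_6 (N p : ℕ) (hN : 2 ≤ N) (hp1 : 1 ≤ p) (hp2 : p ≤ N - 1)
    (α : ℝ) (hα : Real.cos α ≠ 0) (φ : ℝ) (hφ : φ ∈ Set.Ioo (0 : ℝ) (2 * π))
    (heq : (p : ℝ) * Real.sin (φ - α) + ((N : ℝ) - p) * Real.sin (φ + α)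
          - ((N : ℝ) - 2 * p) * Real.sin α = 0) :
    Real.cos φ = -((2 * p * ((N : ℝ) - p)
          + ((N : ℝ) ^ 2 - 2 * p * ((N : ℝ) - p)) * Real.cos (2 * α))
        / ((N : ℝ) ^ 2 + 2 * p * ((N : ℝ) - p) * (Real.cos (2 * α) - 1))) ∧
    Real.cos φ = (((N : ℝ) - 2 * p) ^ 2 * Real.sin α ^ 2
          - (N : ℝ) ^ 2 * Real.cos α ^ 2)
        / (((N : ℝ) - 2 * p) ^ 2 * Real.sin α ^ 2
          + (N : ℝ) ^ 2 * Real.cos α ^ 2) := by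
  obtain ⟨h0, h2π⟩ := hφ
  rw [Real.sin_sub, Real.sin_add] at heq
  set A : ℝ := (N : ℝ) * Real.cos α with hA_def
  set B : ℝ := ((N : ℝ) - 2 * p) * Real.sin α with hB_def
  have hsφ := Real.sin_sq_add_cos_sq φ
  have hsα := Real.sin_sq_add_cos_sq α
  have hkey : A * Real.sin φ = B * (1 - Real.cos φ) := by
    rw [hA_def, hB_def]; linear_combination heq
  have hc1 : Real.cos φ ≠ 1 := by
    intro h
    have hneg : -(2 * π) < φ := by
      have := Real.pi_pos; linarith
    have := (Real.cos_eq_one_iff_of_lt_of_lt hneg h2π).mp h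
    linarith
  have hcne : (1 - Real.cos φ) ≠ 0 := by
    intro h; apply hc1; linarith
  have h3 : (1 - Real.cos φ) * (A ^ 2 * (1 + Real.cos φ))
      = (1 - Real.cos φ) * (B ^ 2 * (1 - Real.cos φ)) := by
    linear_combination (A * Real.sin φ + B * (1 - Real.cos φ)) * hkey
      - A ^ 2 * hsφ
  have h4 := mul_left_cancel₀ hcne h3
  have hA0 : A ≠ 0 := by
    rw [hA_def]
    apply mul_ne_zero _ hα
    have : (0:ℝ) < (N : ℝ) := by
      have : (0:ℕ) < N := by omega
      exact_mod_cast this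
    linarith
  have hA2 : 0 < A ^ 2 := by positivity
  have hden : 0 < A ^ 2 + B ^ 2 := by nlinarith [sq_nonneg B]
  have hc2 : Real.cos φ = (B ^ 2 - A ^ 2) / (A ^ 2 + B ^ 2) := by
    field_simp
    linear_combination h4
  have hD : (N : ℝ) ^ 2 + 2 * p * ((N : ℝ) - p) * (Real.cos (2 * α) - 1)
      = A ^ 2 + B ^ 2 := by
    rw [Real.cos_two_mul, hA_def, hB_def]
    linear_combination (-((N : ℝ) - 2 * p) ^ 2) * hsα
  have hNum : -(2 * p * ((N : ℝ) - p)
      + ((N : ℝ) ^ 2 - 2 * p * ((N : ℝ) - p)) * Real.cos (2 * α))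
      = B ^ 2 - A ^ 2 := by
    rw [Real.cos_two_mul, hA_def, hB_def]
    linear_combination (-((N : ℝ) - 2 * p) ^ 2) * hsα
  constructor
  · rw [hc2, hD, ← neg_div, hNum]
  · rw [hc2, hA_def, hB_def]; ring
end

section
/- (Equilibria of the standard Kuramoto model, α = 0.) Let N ≥ 1 and θ_1,…,θ_N ∈ ℝ. Suppose that ∑_{j=1}^N sin(θ_i − θ_j) takes the same value for all i = 1,…,N. Then either (a) ∑_{j=1}^N cos θ_j = 0 and ∑_{j=1}^N sin θ_j = 0, or (b) for all i, j there is an integer k with θ_i − θ_j = kπ (all pairwise phase differences equal 0 or π modulo 2π). -/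
open Real Finset

/-- Equilibria of the standard Kuramoto model (`α = 0`): if all the sums
`∑_j sin(θ_i - θ_j)` coincide, then either the order parameter vanishes, or
all pairwise phase differences are integer multiples of `π`. -/
theorem stmt_7 (N : ℕ) (hN : 1 ≤ N) (θ : Fin N → ℝ)
    (heq : ∀ i i' : Fin N,
        ∑ j, Real.sin (θ i - θ j) = ∑ j, Real.sin (θ i' - θ j)) :
    ((∑ j, Real.cos (θ j)) = 0 ∧ (∑ j, Real.sin (θ j)) = 0) ∨
    (∀ i j : Fin N, ∃ k : ℤ, θ i - θ j = k * π) := by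
  set C := ∑ j, Real.cos (θ j) with hC
  set S := ∑ j, Real.sin (θ j) with hS
  -- each g_i equals sin θ_i * C - cos θ_i * S
  have hg : ∀ i : Fin N, ∑ j, Real.sin (θ i - θ j)
      = Real.sin (θ i) * C - Real.cos (θ i) * S := by
    intro i
    simp only [Real.sin_sub, hC, hS, Finset.mul_sum]
    rw [Finset.sum_sub_distrib]
  -- total sum is zero by antisymmetry
  have htot : ∑ i : Fin N, ∑ j, Real.sin (θ i - θ j) = 0 := by
    have h1 : ∑ i : Fin N, ∑ j : Fin N, Real.sin (θ i - θ j)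
        = ∑ j : Fin N, ∑ i : Fin N, Real.sin (θ i - θ j) := Finset.sum_comm
    have h2 : ∑ j : Fin N, ∑ i : Fin N, Real.sin (θ i - θ j)
        = -∑ i : Fin N, ∑ j : Fin N, Real.sin (θ i - θ j) := by
      rw [← Finset.sum_neg_distrib]
      refine Finset.sum_congr rfl fun j _ => ?_
      rw [← Finset.sum_neg_distrib]
      refine Finset.sum_congr rfl fun i _ => ?_
      rw [← Real.sin_neg]; ring_nf
    linarith [h1, h2]
  -- hence each g_i = 0
  obtain ⟨i0⟩ : Nonempty (Fin N) := ⟨⟨0, hN⟩⟩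
  have hzero : ∀ i : Fin N, Real.sin (θ i) * C - Real.cos (θ i) * S = 0 := by
    have hall : ∀ i : Fin N, ∑ j, Real.sin (θ i - θ j)
        = ∑ j, Real.sin (θ i0 - θ j) := fun i => heq i i0
    have : ∑ i : Fin N, ∑ j, Real.sin (θ i - θ j)
        = (N : ℝ) * ∑ j, Real.sin (θ i0 - θ j) := by
      rw [Finset.sum_congr rfl fun i _ => hall i]
      simp
    have hNpos : (0:ℝ) < N := by exact_mod_cast hN
    have hg0 : ∑ j, Real.sin (θ i0 - θ j) = 0 := by
      rw [this] at htot
      exact (mul_eq_zero.mp htot).resolve_left (ne_of_gt hNpos)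
    intro i
    rw [← hg i, hall i, hg0]
  by_cases hcs : C = 0 ∧ S = 0
  · exact Or.inl hcs
  · right
    intro i j
    have hi := hzero i
    have hj := hzero j
    have hsin : Real.sin (θ i - θ j) = 0 := by
      have hC0 : Real.sin (θ i - θ j) * C = 0 := by
        rw [Real.sin_sub]
        linear_combination Real.cos (θ j) * hi - Real.cos (θ i) * hj
      have hS0 : Real.sin (θ i - θ j) * S = 0 := by
        rw [Real.sin_sub]
        linear_combination Real.sin (θ j) * hi - Real.sin (θ i) * hj
      rcases mul_eq_zero.mp hC0 with h | h
      · exact h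
      rcases mul_eq_zero.mp hS0 with h' | h'
      · exact h'
      · exact absurd ⟨h, h'⟩ hcs
    obtain ⟨k, hk⟩ := Real.sin_eq_zero_iff.mp hsin
    exact ⟨k, hk.symm⟩
end

section
/- (Equilibria of the Kuramoto–Sakaguchi model at α = π/2.) Let N ≥ 1 and θ_1,…,θ_N ∈ ℝ. Suppose ∑_{j=1}^N sin(θ_i − θ_j − π/2) takes the same value for all i = 1,…,N. Then at least one of the following holds: (a) ∑_{j=1}^N cos θ_j = 0 and ∑_{j=1}^N sin θ_j = 0; (b) all θ_i are pairwise congruent modulo 2π (complete synchrony); (c) N is even and there exist a, b ∈ ℝ with a − b not a multiple of 2π such that exactly N/2 of the θ_i are congruent to a modulo 2π and the other N/2 are congruent to b modulo 2π. -/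
open Real Finset

/-- Equilibria of the Kuramoto–Sakaguchi model at `α = π/2`: if all the sums
`∑_j sin(θ_i - θ_j - π/2)` coincide, then either the order parameter vanishes,
or the state is completely synchronous, or `N` is even and the state is a
balanced two-cluster state (exactly `N/2` phases congruent to `a` and `N/2`
congruent to `b` modulo `2π`, with `a` and `b` distinct modulo `2π`). -/
theorem stmt_8 (N : ℕ) (hN : 1 ≤ N) (θ : Fin N → ℝ)
    (heq : ∀ i i' : Fin N,
        ∑ j, Real.sin (θ i - θ j - π / 2)
          = ∑ j, Real.sin (θ i' - θ j - π / 2)) :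
    ((∑ j, Real.cos (θ j)) = 0 ∧ (∑ j, Real.sin (θ j)) = 0) ∨
    (∀ i j : Fin N, ∃ k : ℤ, θ i - θ j = 2 * π * k) ∨
    (Even N ∧ ∃ a b : ℝ,
        (¬ ∃ k : ℤ, a - b = 2 * π * k) ∧
        (∀ i : Fin N, (∃ k : ℤ, θ i - a = 2 * π * k) ∨
                      (∃ k : ℤ, θ i - b = 2 * π * k)) ∧
        {i : Fin N | ∃ k : ℤ, θ i - a = 2 * π * k}.ncard = N / 2 ∧
        {i : Fin N | ∃ k : ℤ, θ i - b = 2 * π * k}.ncard = N / 2) := by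
  classical
  set C := ∑ j, Real.cos (θ j) with hC
  set S := ∑ j, Real.sin (θ j) with hS
  -- rewrite the sums
  have key : ∀ i : Fin N, ∑ j, Real.sin (θ i - θ j - π / 2)
      = -(Real.cos (θ i) * C + Real.sin (θ i) * S) := by
    intro i
    have h1 : ∀ j : Fin N, Real.sin (θ i - θ j - π / 2)
        = -(Real.cos (θ i) * Real.cos (θ j) + Real.sin (θ i) * Real.sin (θ j)) := by
      intro j
      rw [Real.sin_sub, Real.sin_sub, Real.cos_sub, Real.cos_pi_div_two, Real.sin_pi_div_two]
      ring
    rw [Finset.sum_congr rfl fun j _ => h1 j]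
    rw [hC, hS, Finset.mul_sum, Finset.mul_sum, ← Finset.sum_add_distrib, ← Finset.sum_neg_distrib]
  have hconst : ∀ i i' : Fin N,
      Real.cos (θ i) * C + Real.sin (θ i) * S
        = Real.cos (θ i') * C + Real.sin (θ i') * S := by
    intro i i'
    have h := heq i i'
    rw [key i, key i'] at h
    linarith
  -- the two-point lemma
  have pair : ∀ x y : ℝ,
      Real.cos x * C + Real.sin x * S = Real.cos y * C + Real.sin y * S →
      (¬ ∃ k : ℤ, x - y = 2 * π * k) →
      S * Real.cos ((x + y) / 2) - C * Real.sin ((x + y) / 2) = 0 := by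
    intro x y hxy hne
    have hd : Real.sin ((x - y) / 2) ≠ 0 := by
      intro h0
      obtain ⟨n, hn⟩ := Real.sin_eq_zero_iff.mp h0
      exact hne ⟨n, by push_cast at hn ⊢; linarith⟩
    have h0 : C * (Real.cos x - Real.cos y) + S * (Real.sin x - Real.sin y) = 0 := by
      linear_combination hxy
    rw [Real.cos_sub_cos, Real.sin_sub_sin] at h0
    have h1 : Real.sin ((x - y) / 2)
        * (2 * (S * Real.cos ((x + y) / 2) - C * Real.sin ((x + y) / 2))) = 0 := by
      linear_combination h0
    rcases mul_eq_zero.mp h1 with h | h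
    · exact absurd h hd
    · linarith
  by_cases hOP : C = 0 ∧ S = 0
  · exact Or.inl hOP
  by_cases hsync : ∀ i j : Fin N, ∃ k : ℤ, θ i - θ j = 2 * π * k
  · exact Or.inr (Or.inl hsync)
  push_neg at hsync
  obtain ⟨i0, j0, hab⟩ := hsync
  have hab' : ¬ ∃ k : ℤ, θ i0 - θ j0 = 2 * π * k := by rintro ⟨k, hk⟩; exact hab k hk
  set a := θ i0 with ha
  set b := θ j0 with hb
  -- every phase is in one of the two clusters
  have cluster : ∀ i : Fin N,
      (∃ k : ℤ, θ i - a = 2 * π * k) ∨ (∃ k : ℤ, θ i - b = 2 * π * k) := by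
    intro i
    by_cases h : ∃ k : ℤ, θ i - a = 2 * π * k
    · exact Or.inl h
    · right
      have hne1 : ¬ ∃ k : ℤ, a - θ i = 2 * π * k := by
        rintro ⟨k, hk⟩; exact h ⟨-k, by push_cast; linarith⟩
      have p1 := pair a (θ i) (hconst i0 i) hne1
      have p2 := pair a b (hconst i0 j0) hab'
      have e1 : C * Real.sin ((a + θ i) / 2 - (a + b) / 2) = 0 := by
        rw [Real.sin_sub]
        linear_combination (-Real.cos ((a + b) / 2)) * p1 + Real.cos ((a + θ i) / 2) * p2
      have e2 : S * Real.sin ((a + θ i) / 2 - (a + b) / 2) = 0 := by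
        rw [Real.sin_sub]
        linear_combination (-Real.sin ((a + b) / 2)) * p1 + Real.sin ((a + θ i) / 2) * p2
      have hsin : Real.sin ((a + θ i) / 2 - (a + b) / 2) = 0 := by
        by_cases hC0 : C = 0
        · by_cases hS0 : S = 0
          · exact absurd ⟨hC0, hS0⟩ hOP
          · exact (mul_eq_zero.mp e2).resolve_left hS0
        · exact (mul_eq_zero.mp e1).resolve_left hC0
      obtain ⟨n, hn⟩ := Real.sin_eq_zero_iff.mp hsin
      exact ⟨n, by push_cast at hn ⊢; linarith⟩
  -- the two cluster finsets
  set A : Finset (Fin N) := univ.filter (fun i => ∃ k : ℤ, θ i - a = 2 * π * k) with hA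
  set B : Finset (Fin N) := univ.filter (fun i => ∃ k : ℤ, θ i - b = 2 * π * k) with hB
  have hdisj : ∀ i : Fin N, (∃ k : ℤ, θ i - a = 2 * π * k) →
      (∃ k : ℤ, θ i - b = 2 * π * k) → False := by
    rintro i ⟨k, hk⟩ ⟨l, hl⟩
    exact hab (l - k) (by push_cast; linarith)
  have hcompl : univ.filter (fun i => ¬ ∃ k : ℤ, θ i - a = 2 * π * k) = B := by
    ext i
    simp only [hB, Finset.mem_filter, Finset.mem_univ, true_and]
    constructor
    · intro h; exact (cluster i).resolve_left h
    · intro h hcon; exact hdisj i hcon h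
  -- congruence gives equal cos and sin
  have per : ∀ (x c : ℝ), (∃ k : ℤ, x - c = 2 * π * k) →
      Real.cos x = Real.cos c ∧ Real.sin x = Real.sin c := by
    rintro x c ⟨k, hk⟩
    have hx : x = c + (k : ℝ) * (2 * π) := by push_cast; linarith
    rw [hx, Real.cos_add_int_mul_two_pi, Real.sin_add_int_mul_two_pi]
    exact ⟨rfl, rfl⟩
  have memA : ∀ i ∈ A, (∃ k : ℤ, θ i - a = 2 * π * k) := by
    intro i hi; rw [hA, Finset.mem_filter] at hi; exact hi.2
  have memB : ∀ i ∈ B, (∃ k : ℤ, θ i - b = 2 * π * k) := by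
    intro i hi; rw [hB, Finset.mem_filter] at hi; exact hi.2
  -- values of C and S
  have hCval : C = A.card * Real.cos a + B.card * Real.cos b := by
    rw [hC, ← Finset.sum_filter_add_sum_filter_not univ
      (fun i => ∃ k : ℤ, θ i - a = 2 * π * k), hcompl, ← hA]
    rw [Finset.sum_congr rfl (fun i hi => (per _ _ (memA i hi)).1),
        Finset.sum_congr rfl (fun i hi => (per _ _ (memB i hi)).1),
        Finset.sum_const, Finset.sum_const, nsmul_eq_mul, nsmul_eq_mul]
  have hSval : S = A.card * Real.sin a + B.card * Real.sin b := by
    rw [hS, ← Finset.sum_filter_add_sum_filter_not univ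
      (fun i => ∃ k : ℤ, θ i - a = 2 * π * k), hcompl, ← hA]
    rw [Finset.sum_congr rfl (fun i hi => (per _ _ (memA i hi)).2),
        Finset.sum_congr rfl (fun i hi => (per _ _ (memB i hi)).2),
        Finset.sum_const, Finset.sum_const, nsmul_eq_mul, nsmul_eq_mul]
  -- the balance equation
  have hE := hconst i0 j0
  rw [hCval, hSval] at hE
  have hcos1 : Real.cos (a - b) ≠ 1 := by
    intro h0
    obtain ⟨n, hn⟩ := (Real.cos_eq_one_iff _).mp h0
    exact hab n (by push_cast at hn ⊢; linarith)
  have hbal : ((A.card : ℝ) - B.card) * (1 - Real.cos (a - b)) = 0 := by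
    rw [Real.cos_sub]
    linear_combination hE - (A.card : ℝ) * Real.sin_sq_add_cos_sq a
      + (B.card : ℝ) * Real.sin_sq_add_cos_sq b
  have hpq : (A.card : ℝ) = B.card := by
    rcases mul_eq_zero.mp hbal with h | h
    · linarith
    · exact absurd (by linarith : Real.cos (a - b) = 1) hcos1
  have hcard : A.card = B.card := by exact_mod_cast hpq
  -- total count
  have htot : A.card + B.card = N := by
    have h1 := Finset.card_filter_add_card_filter_not
      (s := (univ : Finset (Fin N))) (p := fun i => ∃ k : ℤ, θ i - a = 2 * π * k)
    rw [hcompl, ← hA] at h1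
    simpa using h1
  refine Or.inr (Or.inr ⟨⟨A.card, by omega⟩, a, b, hab', cluster, ?_, ?_⟩)
  · have hset : {i : Fin N | ∃ k : ℤ, θ i - a = 2 * π * k} = ↑A := by
      ext i; simp [hA]
    rw [hset, Set.ncard_coe_finset]
    omega
  · have hset : {i : Fin N | ∃ k : ℤ, θ i - b = 2 * π * k} = ↑B := by
      ext i; simp [hB]
    rw [hset, Set.ncard_coe_finset]
    omega
end

section
/- Let p ≥ 1, N = 2p, and a, b ∈ ℝ. Define θ_i = a for 1 ≤ i ≤ p and θ_i = b for p+1 ≤ i ≤ N. Then at phase shift α = π/2 the quantity g_i(θ, π/2) = −∑_{j=1}^N sin(θ_i − θ_j − π/2) takes the same value for all i = 1,…,N. In other words, for an even number of oscillators and α = π/2, every balanced two-cluster configuration with arbitrary phase separation a − b is an equilibrium of the phase-difference system, so the whole invariant line with isotropy S_{N/2} × S_{N/2} consists of fixed points. -/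
open Real Finset

lemma two_cluster_sum_aux (p : ℕ) (x y : ℝ) :
    ∑ j ∈ Finset.range (2*p), (if j < p then x else y) = p*x + p*y := by
  rw [Finset.sum_ite]
  have h1 : Finset.filter (fun j => j < p) (Finset.range (2*p)) = Finset.range p := by
    ext j; simp; omega
  have h2 : Finset.filter (fun j => ¬ j < p) (Finset.range (2*p)) = Finset.Ico p (2*p) := by
    ext j; simp; omega
  rw [h1, h2, Finset.sum_const, Finset.sum_const, Finset.card_range, Nat.card_Ico]
  have : 2*p - p = p := by omega
  rw [this]; simp [nsmul_eq_mul]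

/-- For an even number `N = 2p` of oscillators at phase shift `α = π/2`, every
balanced two-cluster configuration (with arbitrary phase separation `a - b`)
is an equilibrium of the phase-difference system: all the quantities
`g_i(θ, π/2) = -∑_j sin(θ_i - θ_j - π/2)` coincide. -/
theorem stmt_9 (p : ℕ) (hp : 1 ≤ p) (N : ℕ) (hN : N = 2 * p) (a b : ℝ)
    (θ : Fin N → ℝ) (hθ : ∀ i : Fin N, θ i = if (i : ℕ) < p then a else b) :
    ∀ i i' : Fin N,
      -(∑ j, Real.sin (θ i - θ j - π / 2))
        = -(∑ j, Real.sin (θ i' - θ j - π / 2)) := by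
  subst hN
  have hsum : ∀ c : ℝ, ∑ j : Fin (2*p), Real.sin (c - θ j - π/2)
      = -((p : ℝ) * Real.cos (c - a) + (p : ℝ) * Real.cos (c - b)) := by
    intro c
    have hterm : ∀ j : Fin (2*p), Real.sin (c - θ j - π/2)
        = (fun k : ℕ => if k < p then -(Real.cos (c-a)) else -(Real.cos (c-b))) (j : ℕ) := by
      intro j
      rw [hθ j]
      by_cases h : (j : ℕ) < p <;> simp [h, Real.sin_sub]
    rw [Finset.sum_congr rfl (fun j _ => hterm j),
      Fin.sum_univ_eq_sum_range (fun k : ℕ => if k < p then -(Real.cos (c-a)) else -(Real.cos (c-b))) (2*p),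
      two_cluster_sum_aux]
    ring
  intro i i'
  rw [hsum (θ i), hsum (θ i'), hθ i, hθ i']
  have hcos : Real.cos (b - a) = Real.cos (a - b) := by
    rw [show b - a = -(a - b) by ring, Real.cos_neg]
  split_ifs <;> simp [sub_self, hcos] <;> ring
end

section
/- (Linearization at full synchrony, nonlinear coupling α(r) = β₁ + β₂r².) Let N ≥ 2 and β₁, β₂ ∈ ℝ. Define r²(φ) = (1/N²)[(1 + ∑_{j=1}^{N−1} cos φ_j)² + (∑_{j=1}^{N−1} sin φ_j)²] and A(φ) = β₁ + β₂ r²(φ), and define F : ℝ^{N−1} → ℝ^{N−1} by F_i(φ) = −(1/N)[ ∑_{j=1, j≠i}^{N−1} sin(φ_i − φ_j + A(φ)) + sin(φ_i + A(φ)) + ∑_{j=1}^{N−1} sin(φ_j − A(φ)) ]. Then the Fréchet derivative of F at φ = 0 equals −cos(β₁ + β₂) times the identity operator on ℝ^{N−1}. In particular, the fully synchronous state (where r = 1, so A = β₁ + β₂) is linearly stable when cos(β₁ + β₂) > 0 and loses stability on the lines β₁ + β₂ = π/2 + πm, m ∈ ℤ. -/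
open Real Finset

/-! At full synchrony `r² = 1` is maximal, so `r²`, and with it the phase shift `A`, has vanishing
derivative there: `(∑ sin φⱼ)²` is the square of a function vanishing at `0`, and
`(1 + ∑ cos φⱼ)²` that of a function stationary at `0`. Linearizing `F` therefore only
differentiates the explicit phases, each sine contributing a factor `cos (β₁ + β₂)`, and the
bracket in `Fᵢ` linearizes to `N cos (β₁ + β₂) φᵢ`. -/

section

variable {ι : Type*} [Fintype ι]

lemma sum_filter_ne_sub_add_self_add_sum {R : Type*} [CommRing R] [DecidableEq ι]
    (v : ι → R) (i : ι) :
    ∑ j ∈ univ.filter (fun j => j ≠ i), (v i - v j) + v i + ∑ j, v j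
      = (Fintype.card ι + 1) * v i := by
  rw [sum_filter_of_ne fun j _ h => by rintro rfl; exact h (sub_self _), sum_sub_distrib,
    sum_const, card_univ, nsmul_eq_mul]
  ring

lemma hasFDerivAt_one_add_sum_cos_sq_add_sum_sin_sq_zero :
    HasFDerivAt (fun φ : ι → ℝ => (1 + ∑ j, cos (φ j)) ^ 2 + (∑ j, sin (φ j)) ^ 2)
      (0 : (ι → ℝ) →L[ℝ] ℝ) 0 := by
  have hcos := HasFDerivAt.fun_sum fun j (_ : j ∈ univ) =>
    (hasFDerivAt_apply j (0 : ι → ℝ)).cos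
  have hsin := HasFDerivAt.fun_sum fun j (_ : j ∈ univ) =>
    (hasFDerivAt_apply j (0 : ι → ℝ)).sin
  simpa using ((hcos.const_add 1).pow 2).fun_add (hsin.pow 2)

lemma hasFDerivAt_coupling_zero [DecidableEq ι] (n : ℝ) (A : (ι → ℝ) → ℝ)
    (hA : HasFDerivAt A (0 : (ι → ℝ) →L[ℝ] ℝ) 0) (i : ι) :
    HasFDerivAt (fun φ : ι → ℝ => -(1 / n) *
        (∑ j ∈ univ.filter (fun j => j ≠ i), sin (φ i - φ j + A φ)
          + sin (φ i + A φ) + ∑ j, sin (φ j - A φ)))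
      ((-(1 / n) * cos (A 0) * (Fintype.card ι + 1)) •
        (ContinuousLinearMap.proj i : (ι → ℝ) →L[ℝ] ℝ)) 0 := by
  let e (j : ι) : (ι → ℝ) →L[ℝ] ℝ := ContinuousLinearMap.proj j
  have he (j : ι) : HasFDerivAt (fun φ : ι → ℝ => φ j) (e j) 0 := hasFDerivAt_apply j 0
  have h_pair : HasFDerivAt
      (fun φ : ι → ℝ => ∑ j ∈ univ.filter (fun j => j ≠ i), sin (φ i - φ j + A φ))
      (∑ j ∈ univ.filter (fun j => j ≠ i), cos (A 0) • (e i - e j)) 0 :=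
    HasFDerivAt.fun_sum fun j _ => by simpa using (((he i).fun_sub (he j)).fun_add hA).sin
  have h_self : HasFDerivAt (fun φ : ι → ℝ => sin (φ i + A φ)) (cos (A 0) • e i) 0 := by
    simpa using ((he i).fun_add hA).sin
  have h_mean : HasFDerivAt (fun φ : ι → ℝ => ∑ j, sin (φ j - A φ))
      (∑ j, cos (A 0) • e j) 0 :=
    HasFDerivAt.fun_sum fun j _ => by simpa using ((he j).fun_sub hA).sin
  refine (((h_pair.fun_add h_self).fun_add h_mean).const_mul (-(1 / n))).congr_fderiv ?_
  ext v
  simp only [e, smul_apply, add_apply, _root_.sum_apply, sub_apply, ContinuousLinearMap.proj_apply,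
    smul_eq_mul, ← mul_sum]
  linear_combination (-(1 / n) * cos (A 0)) * sum_filter_ne_sub_add_self_add_sum v i

end

theorem stmt_11_general (N : ℕ) (β₁ β₂ : ℝ)
    (r2 : (Fin (N - 1) → ℝ) → ℝ)
    (hr2 : ∀ φ : Fin (N - 1) → ℝ,
      r2 φ = (1 / (N : ℝ) ^ 2) *
        ((1 + ∑ j, Real.cos (φ j)) ^ 2 + (∑ j, Real.sin (φ j)) ^ 2))
    (A : (Fin (N - 1) → ℝ) → ℝ)
    (hA : ∀ φ : Fin (N - 1) → ℝ, A φ = β₁ + β₂ * r2 φ)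
    (F : (Fin (N - 1) → ℝ) → (Fin (N - 1) → ℝ))
    (hF : ∀ φ : Fin (N - 1) → ℝ, ∀ i : Fin (N - 1),
      F φ i = -(1 / (N : ℝ)) *
        ((∑ j ∈ Finset.univ.filter (fun j => j ≠ i),
            Real.sin (φ i - φ j + A φ))
          + Real.sin (φ i + A φ)
          + ∑ j, Real.sin (φ j - A φ))) :
    fderiv ℝ F 0
      = (-Real.cos (β₁ + β₂)) • ContinuousLinearMap.id ℝ (Fin (N - 1) → ℝ) := by
  refine (hasFDerivAt_pi'' fun i => ?_).fderiv
  have hN : ((N - 1 : ℕ) : ℝ) + 1 = N := by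
    rw [Nat.cast_sub (by have := i.pos; omega)]; ring
  have hN_ne_zero : (N : ℝ) ≠ 0 := by rw [← hN]; positivity
  have hr2_deriv : HasFDerivAt r2 (0 : (Fin (N - 1) → ℝ) →L[ℝ] ℝ) 0 := by
    rw [funext hr2]
    exact (hasFDerivAt_one_add_sum_cos_sq_add_sum_sin_sq_zero.const_mul _).congr_fderiv
      (smul_zero _)
  have hr2_zero : r2 0 = 1 := by
    rw [hr2]
    simp [add_comm, hN, hN_ne_zero]
  have hA_deriv : HasFDerivAt A (0 : (Fin (N - 1) → ℝ) →L[ℝ] ℝ) 0 := by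
    rw [funext hA]
    simpa using (hr2_deriv.const_mul β₂).const_add β₁
  have hA_zero : A 0 = β₁ + β₂ := by rw [hA, hr2_zero, mul_one]
  refine ((hasFDerivAt_coupling_zero (N : ℝ) A hA_deriv i).congr_fderiv ?_).congr_of_eventuallyEq
    (Filter.Eventually.of_forall fun φ => hF φ i)
  rw [Fintype.card_fin, hN, hA_zero,
    show -(1 / (N : ℝ)) * cos (β₁ + β₂) * N = -cos (β₁ + β₂) by field_simp]
  ext v
  simp

/-- Linearization at full synchrony for the nonlinear coupling
`α(r) = β₁ + β₂ r²`: with `r²(φ)` and `A(φ) = β₁ + β₂ r²(φ)` expressed in the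
phase-difference variables, the Fréchet derivative of the vector field `F` at
`φ = 0` equals `-cos(β₁ + β₂)` times the identity. -/
theorem stmt_11 (N : ℕ) (hN : 2 ≤ N) (β₁ β₂ : ℝ)
    (r2 : (Fin (N - 1) → ℝ) → ℝ)
    (hr2 : ∀ φ : Fin (N - 1) → ℝ,
      r2 φ = (1 / (N : ℝ) ^ 2) *
        ((1 + ∑ j, Real.cos (φ j)) ^ 2 + (∑ j, Real.sin (φ j)) ^ 2))
    (A : (Fin (N - 1) → ℝ) → ℝ)
    (hA : ∀ φ : Fin (N - 1) → ℝ, A φ = β₁ + β₂ * r2 φ)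
    (F : (Fin (N - 1) → ℝ) → (Fin (N - 1) → ℝ))
    (hF : ∀ φ : Fin (N - 1) → ℝ, ∀ i : Fin (N - 1),
      F φ i = -(1 / (N : ℝ)) *
        ((∑ j ∈ Finset.univ.filter (fun j => j ≠ i),
            Real.sin (φ i - φ j + A φ))
          + Real.sin (φ i + A φ)
          + ∑ j, Real.sin (φ j - A φ))) :
    fderiv ℝ F 0
      = (-Real.cos (β₁ + β₂)) • ContinuousLinearMap.id ℝ (Fin (N - 1) → ℝ) :=
  stmt_11_general N β₁ β₂ r2 hr2 A hA F hF
end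

section
/- (Eigenvalues at the splay state.) Let N ≥ 3 and α ∈ ℝ. Let A be the (N−1)×(N−1) real matrix with entries A_{k i} = cos(2π(i − k)/N − α) − cos(2πi/N − α) for k, i = 1,…,N−1 (the Jacobian of the phase-difference system at the uniform splay state φ_i = 2πi/N). Then the characteristic polynomial of A equals X^{N−3}·(X² − N cos α · X + N²/4). In particular, A has the eigenvalue 0 with multiplicity N−3 and the pair of eigenvalues (N/2)(cos α ± i sin α), so an Andronov–Hopf bifurcation of the splay state occurs at cos α = 0. -/
/-!
With `θ_k = 2π(k+1)/N`, the addition formula splits the Jacobian as `A = U V` through `ℝ²`,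
where `U_k = (cos θ_k - 1, sin θ_k)` and `V_i = (cos (θ_i - α), sin (θ_i - α))`.
Hence `charpoly (U V) = X ^ (N - 3) * charpoly (V U)`, and the `2 × 2` matrix `V U` is
`N/2 • [[cos α, sin α], [-sin α, cos α]]`: after product-to-sum, its entries only involve
`∑ₖ cos (m θ_k - α)` and `∑ₖ sin (m θ_k - α)` for `m = 1, 2`, which are read off from the
vanishing of `∑ₖ ζ^(m k)` over the `N`-th roots of unity `ζ^k`.
-/

open Real Polynomial Finset

noncomputable def splayAngle (N k : ℕ) : ℝ := 2 * π * (k + 1) / N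

lemma sum_range_cexp_two_pi_mul_eq_zero {N m : ℕ} (hm0 : m ≠ 0) (hmN : m < N) :
    ∑ k ∈ range N, Complex.exp (2 * π * Complex.I * m * k / N) = 0 := by
  set ζ := Complex.exp (2 * π * Complex.I / N)
  have hζ : IsPrimitiveRoot ζ N := Complex.isPrimitiveRoot_exp N (by omega)
  have hz1 : ζ ^ m ≠ 1 := hζ.pow_ne_one_of_pos_of_lt hm0 hmN
  have hzN : (ζ ^ m) ^ N = 1 := by rw [← pow_mul, mul_comm, pow_mul, hζ.pow_eq_one, one_pow]
  calc ∑ k ∈ range N, Complex.exp (2 * π * Complex.I * m * k / N)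
      = ∑ k ∈ range N, (ζ ^ m) ^ k := by
        refine sum_congr rfl fun k _ => ?_
        rw [← pow_mul, ← Complex.exp_nat_mul]
        push_cast
        ring_nf
    _ = 0 := by rw [geom_sum_eq hz1, hzN, sub_self, zero_div]

lemma sum_cexp_splayAngle {N m : ℕ} (hm0 : m ≠ 0) (hmN : m < N) (α : ℝ) :
    ∑ k : Fin (N - 1), Complex.exp ((m * splayAngle N k - α : ℝ) * Complex.I)
      = -Complex.exp (-α * Complex.I) := by
  have h := sum_range_cexp_two_pi_mul_eq_zero hm0 hmN
  obtain ⟨M, rfl⟩ : ∃ M, N = M + 1 := ⟨N - 1, by omega⟩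
  rw [sum_range_succ'] at h
  simp only [Nat.cast_zero, mul_zero, zero_div, Complex.exp_zero] at h
  have hterm (k : ℕ) : Complex.exp ((m * splayAngle (M + 1) k - α : ℝ) * Complex.I) =
      Complex.exp (2 * π * Complex.I * m * (k + 1 : ℕ) / (M + 1 : ℕ)) *
        Complex.exp (-α * Complex.I) := by
    rw [← Complex.exp_add, splayAngle]
    push_cast
    ring_nf
  rw [Nat.add_sub_cancel, Fin.sum_univ_eq_sum_range
    (fun k => Complex.exp ((m * splayAngle (M + 1) k - α : ℝ) * Complex.I))]
  simp only [hterm, ← sum_mul]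
  linear_combination Complex.exp (-α * Complex.I) * h

lemma sum_cos_splayAngle {N m : ℕ} (hm0 : m ≠ 0) (hmN : m < N) (α : ℝ) :
    ∑ k : Fin (N - 1), cos (m * splayAngle N k - α) = -cos α := by
  have h := congrArg Complex.re (sum_cexp_splayAngle hm0 hmN α)
  rw [Complex.re_sum, ← Complex.ofReal_neg, Complex.neg_re, Complex.exp_ofReal_mul_I_re,
    cos_neg] at h
  simpa only [Complex.exp_ofReal_mul_I_re] using h

lemma sum_sin_splayAngle {N m : ℕ} (hm0 : m ≠ 0) (hmN : m < N) (α : ℝ) :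
    ∑ k : Fin (N - 1), sin (m * splayAngle N k - α) = sin α := by
  have h := congrArg Complex.im (sum_cexp_splayAngle hm0 hmN α)
  rw [Complex.im_sum, ← Complex.ofReal_neg, Complex.neg_im, Complex.exp_ofReal_mul_I_im,
    sin_neg, neg_neg] at h
  simpa only [Complex.exp_ofReal_mul_I_im] using h

noncomputable def splayU (N : ℕ) : Matrix (Fin (N - 1)) (Fin 2) ℝ :=
  Matrix.of fun k => ![cos (splayAngle N k) - 1, sin (splayAngle N k)]

noncomputable def splayV (N : ℕ) (α : ℝ) : Matrix (Fin 2) (Fin (N - 1)) ℝ :=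
  Matrix.of ![fun i => cos (splayAngle N i - α), fun i => sin (splayAngle N i - α)]

lemma splayU_mul_splayV_apply (N : ℕ) (α : ℝ) (k i : Fin (N - 1)) :
    (splayU N * splayV N α) k i
      = cos (splayAngle N i - α - splayAngle N k) - cos (splayAngle N i - α) := by
  simp only [Matrix.mul_apply, Fin.sum_univ_two, splayU, splayV, Matrix.of_apply,
    Matrix.cons_val_zero, Matrix.cons_val_one, cos_sub (splayAngle N i - α)]
  ring

lemma splayV_mul_splayU {N : ℕ} (hN : 3 ≤ N) (α : ℝ) :
    splayV N α * splayU N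
      = !![N / 2 * cos α, N / 2 * sin α; -(N / 2 * sin α), N / 2 * cos α] := by
  have hc1 := sum_cos_splayAngle (N := N) (m := 1) one_ne_zero (by omega) α
  have hs1 := sum_sin_splayAngle (N := N) (m := 1) one_ne_zero (by omega) α
  have hc2 := sum_cos_splayAngle (N := N) (m := 2) two_ne_zero (by omega) α
  have hs2 := sum_sin_splayAngle (N := N) (m := 2) two_ne_zero (by omega) α
  simp only [Nat.cast_one, one_mul, Nat.cast_ofNat] at hc1 hs1 hc2 hs2
  have hcard : ((N - 1 : ℕ) : ℝ) = N - 1 := Nat.cast_pred (by omega)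
  have hcos (θ : ℝ) : cos (2 * θ - α) = cos θ * cos (θ - α) - sin θ * sin (θ - α) := by
    rw [← cos_add]; ring_nf
  have hsin (θ : ℝ) : sin (2 * θ - α) = sin θ * cos (θ - α) + cos θ * sin (θ - α) := by
    rw [← sin_add]; ring_nf
  have hcos' (θ : ℝ) : cos α = cos θ * cos (θ - α) + sin θ * sin (θ - α) := by
    rw [← cos_sub, sub_sub_cancel]
  have hsin' (θ : ℝ) : sin α = sin θ * cos (θ - α) - cos θ * sin (θ - α) := by
    rw [← sin_sub, sub_sub_cancel]
  have e00 (θ : ℝ) :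
      cos (θ - α) * (cos θ - 1) = cos (2 * θ - α) / 2 - cos (θ - α) + cos α / 2 := by
    linear_combination (-hcos θ - hcos' θ) / 2
  have e01 (θ : ℝ) : cos (θ - α) * sin θ = sin (2 * θ - α) / 2 + sin α / 2 := by
    linear_combination (-hsin θ - hsin' θ) / 2
  have e10 (θ : ℝ) :
      sin (θ - α) * (cos θ - 1) = sin (2 * θ - α) / 2 - sin (θ - α) - sin α / 2 := by
    linear_combination (-hsin θ + hsin' θ) / 2
  have e11 (θ : ℝ) : sin (θ - α) * sin θ = cos α / 2 - cos (2 * θ - α) / 2 := by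
    linear_combination (hcos θ - hcos' θ) / 2
  ext r s
  fin_cases r <;> fin_cases s <;>
    simp only [Matrix.mul_apply, splayU, splayV, Matrix.of_apply, Fin.zero_eta, Fin.mk_one,
      Matrix.cons_val', Matrix.cons_val_fin_one, Matrix.cons_val_zero, Matrix.cons_val_one, e00,
      e01, e10, e11, sum_add_distrib, sum_sub_distrib, ← sum_div, hc1, hc2, hs1, hs2, sum_const,
      card_univ, Fintype.card_fin, nsmul_eq_mul, hcard] <;>
    ring

/-- Eigenvalues at the splay state: the Jacobian of the phase-difference
system at the uniform splay state `φ_i = 2πi/N` (entries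
`A_{k i} = cos(2π(i-k)/N - α) - cos(2πi/N - α)`, indices `1,…,N-1`) has
characteristic polynomial `X^{N-3}·(X² - N cos α · X + N²/4)`; hence the
eigenvalue `0` with multiplicity `N-3` and the pair `(N/2)(cos α ± i sin α)`. -/
theorem stmt_15 (N : ℕ) (hN : 3 ≤ N) (α : ℝ)
    (A : Matrix (Fin (N - 1)) (Fin (N - 1)) ℝ)
    (hA : ∀ k i : Fin (N - 1),
      A k i = Real.cos (2 * π * (((i : ℕ) + 1 : ℝ) - ((k : ℕ) + 1 : ℝ)) / N - α)
            - Real.cos (2 * π * ((i : ℕ) + 1 : ℝ) / N - α)) :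
    A.charpoly
      = X ^ (N - 3) *
        (X ^ 2 - Polynomial.C ((N : ℝ) * Real.cos α) * X
          + Polynomial.C ((N : ℝ) ^ 2 / 4)) := by
  have hA_eq : A = splayU N * splayV N α := by
    ext k i
    rw [hA, splayU_mul_splayV_apply, splayAngle, splayAngle]
    ring_nf
  have htrace : (splayV N α * splayU N).trace = N * cos α := by
    rw [splayV_mul_splayU hN, Matrix.trace_fin_two_of]
    ring
  have hdet : (splayV N α * splayU N).det = N ^ 2 / 4 := by
    rw [splayV_mul_splayU hN, Matrix.det_fin_two_of]
    linear_combination (N : ℝ) ^ 2 / 4 * cos_sq_add_sin_sq α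
  rw [hA_eq, Matrix.charpoly_mul_comm_of_le _ _ (by simp only [Fintype.card_fin]; omega), Matrix.charpoly_fin_two,
    htrace, hdet, Fintype.card_fin, Fintype.card_fin, show N - 1 - 2 = N - 3 by omega]
end

section
/- Let z₁, z₂, z₃, z₄ be complex numbers with |z₁| = |z₂| = |z₃| = |z₄| = 1 and z₁ + z₂ + z₃ + z₄ = 0. Then the four numbers split into two antipodal pairs: (z₂ = −z₁ and z₄ = −z₃), or (z₃ = −z₁ and z₄ = −z₂), or (z₄ = −z₁ and z₃ = −z₂). -/
open Complex

/-! If `a + b + c + d = 0` then `(a + b)(a + c)(a + d)` equals the third elementary symmetric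
function of `a, b, c, d`, which is `abcd` times the sum of the inverses. For unit complex numbers
inverses are conjugates, so that sum is the conjugate of `a + b + c + d = 0`; hence one of
`a + b`, `a + c`, `a + d` vanishes, and the remaining two numbers then cancel as well. -/

theorem antipodal_pairs_of_add_eq_zero {R : Type*} [CommRing R] [NoZeroDivisors R] {a b c d : R}
    (hsum : a + b + c + d = 0) (he3 : b * c * d + a * c * d + a * b * d + a * b * c = 0) :
    (b = -a ∧ d = -c) ∨ (c = -a ∧ d = -b) ∨ (d = -a ∧ c = -b) := by
  have hprod : (a + b) * ((a + c) * (a + d)) = 0 := by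
    linear_combination a ^ 2 * hsum + he3
  rcases mul_eq_zero.1 hprod with hab | hprod
  · exact .inl ⟨by linear_combination hab, by linear_combination hsum - hab⟩
  rcases mul_eq_zero.1 hprod with hac | had
  · exact .inr <| .inl ⟨by linear_combination hac, by linear_combination hsum - hac⟩
  · exact .inr <| .inr ⟨by linear_combination had, by linear_combination hsum - had⟩

theorem esymm_three_eq_zero_of_inv_add_eq_zero {K : Type*} [Field K] {a b c d : K}
    (ha : a ≠ 0) (hb : b ≠ 0) (hc : c ≠ 0) (hd : d ≠ 0)
    (hinv : a⁻¹ + b⁻¹ + c⁻¹ + d⁻¹ = 0) :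
    b * c * d + a * c * d + a * b * d + a * b * c = 0 := by
  field_simp at hinv
  linear_combination hinv

theorem Complex.inv_add_eq_zero_of_norm_eq_one {a b c d : ℂ}
    (ha : ‖a‖ = 1) (hb : ‖b‖ = 1) (hc : ‖c‖ = 1) (hd : ‖d‖ = 1)
    (hsum : a + b + c + d = 0) :
    a⁻¹ + b⁻¹ + c⁻¹ + d⁻¹ = 0 := by
  rw [inv_eq_conj ha, inv_eq_conj hb, inv_eq_conj hc, inv_eq_conj hd,
    ← map_add, ← map_add, ← map_add, hsum, map_zero]

/-- Four unit complex numbers summing to zero split into two antipodal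
pairs. -/
theorem stmt_17 (z₁ z₂ z₃ z₄ : ℂ)
    (h1 : ‖z₁‖ = 1) (h2 : ‖z₂‖ = 1)
    (h3 : ‖z₃‖ = 1) (h4 : ‖z₄‖ = 1)
    (hsum : z₁ + z₂ + z₃ + z₄ = 0) :
    (z₂ = -z₁ ∧ z₄ = -z₃) ∨ (z₃ = -z₁ ∧ z₄ = -z₂) ∨ (z₄ = -z₁ ∧ z₃ = -z₂) := by
  have hne {z : ℂ} (hz : ‖z‖ = 1) : z ≠ 0 := ne_zero_of_norm_ne_zero (by simp [hz])
  refine antipodal_pairs_of_add_eq_zero hsum ?_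
  exact esymm_three_eq_zero_of_inv_add_eq_zero (hne h1) (hne h2) (hne h3) (hne h4)
    (inv_add_eq_zero_of_norm_eq_one h1 h2 h3 h4 hsum)
end
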